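/- (Lemma 6.6, population computers for remainder predicates) Let θ ≥ 1, d = ⌈log₂ θ⌉, and let φ = (a1x1+…+avxv ≡ c (mod θ)) be a remainder predicate where each a_i ∈ {2^j : 0 ≤ j ≤ d−1} ∩ {1,…,θ−1} and 0 ≤ c ≤ θ−1. Then there exists a bounded population computer P=(Q,δ,I,O,H) with set of states Q = {0} ∪ {2^j : 0 ≤ j ≤ d} (hence at most d+2 states), input states I = {a1,…,av}, helper multiset H consisting of 3d agents in state 0, and output function satisfying O(S)=1 iff Σ_{q∈S} q ≡ c (mod θ), such that P decides φ (for every x ∈ ℕ^v the input with x_i agents in state a_i has output 1 iff Σa_ix_i ≡ c (mod θ)); moreover every run of P from an initial configuration with n agents has length at most (n+1)². -/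

import Mathlib

open scoped ENNReal Classical

namespace PaperPP

/-- Population computers (Angluin-style generalization). -/
structure PopComputer (σ : Type) where
  Q : Finset σ
  δ : Finset (Multiset σ × Multiset σ)
  I : Finset σ
  O : Finset σ → Option Bool
  H : Multiset σ
  delta_mem : ∀ t ∈ δ, ∀ q ∈ t.1 + t.2, q ∈ Q
  delta_card : ∀ t ∈ δ, Multiset.card t.2 = Multiset.card t.1 ∧ 2 ≤ Multiset.card t.1
  delta_supp : ∀ t ∈ δ, ∃ a b : σ, ∀ q ∈ t.1, q = a ∨ q = b
  delta_fun : ∀ t ∈ δ, ∀ u ∈ δ, t.1 = u.1 → t.2 = u.2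
  I_sub : I ⊆ Q
  H_mem : ∀ q ∈ H, q ∈ Q ∧ q ∉ I

variable {σ : Type}

def Step (P : PopComputer σ) (C C' : Multiset σ) : Prop :=
  ∃ t ∈ P.δ, t.1 ≤ C ∧ C' = C - t.1 + t.2

def Reaches (P : PopComputer σ) : Multiset σ → Multiset σ → Prop :=
  Relation.ReflTransGen (Step P)

def Terminal (P : PopComputer σ) (C : Multiset σ) : Prop :=
  ∀ t ∈ P.δ, ¬ t.1 ≤ C

def IsInput (P : PopComputer σ) (C : Multiset σ) : Prop :=
  ∀ q ∈ C, q ∈ P.I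

def Initial (P : PopComputer σ) (CI C0 : Multiset σ) : Prop :=
  ∃ CH : Multiset σ, (∀ q ∈ CH, q ∈ P.H) ∧ P.H ≤ CH ∧ C0 = CI + CH

def ReachableConfig (P : PopComputer σ) (C : Multiset σ) : Prop :=
  ∃ CI C0, IsInput P CI ∧ Initial P CI C0 ∧ Reaches P C0 C

def IsRun (P : PopComputer σ) (f : ℕ → Multiset σ) : Prop :=
  ∀ i, Step P (f i) (f (i + 1)) ∨ (Terminal P (f i) ∧ f (i + 1) = f i)

def FairRun (P : PopComputer σ) (f : ℕ → Multiset σ) : Prop :=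
  IsRun P f ∧ ∀ C : Multiset σ, {i | Reaches P (f i) C}.Infinite → ∃ j, f j = C

def StabilizesTo [DecidableEq σ] (P : PopComputer σ) (f : ℕ → Multiset σ) (b : Bool) : Prop :=
  ∃ i, ∀ C, Reaches P (f i) C → P.O C.toFinset = some b

def HasOutput [DecidableEq σ] (P : PopComputer σ) (CI : Multiset σ) (b : Bool) : Prop :=
  ∀ C0 f, Initial P CI C0 → FairRun P f → f 0 = C0 → StabilizesTo P f b

def Decides [DecidableEq σ] (P : PopComputer σ) (φ : Multiset σ → Bool) : Prop :=
  ∀ CI, IsInput P CI → HasOutput P CI (φ CI)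

def Bounded (P : PopComputer σ) : Prop :=
  ¬ ∃ f : ℕ → Multiset σ,
      (∃ CI, IsInput P CI ∧ Initial P CI (f 0)) ∧ ∀ i, Step P (f i) (f (i + 1))

def Terminating (P : PopComputer σ) : Prop :=
  ∀ f : ℕ → Multiset σ, (∃ CI, IsInput P CI ∧ Initial P CI (f 0)) → FairRun P f →
    ∃ i, Terminal P (f i)

def Binary (P : PopComputer σ) : Prop := ∀ t ∈ P.δ, Multiset.card t.1 = 2

def ConsensusOutput [DecidableEq σ] (P : PopComputer σ) : Prop :=
  ∃ Q1 : Finset σ, Q1 ⊆ P.Q ∧ ∀ S : Finset σ, S ⊆ P.Q → S.Nonempty →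
    P.O S = if S ⊆ Q1 then some true else if S ⊆ P.Q \ Q1 then some false else none

def MarkedConsensusOutput [DecidableEq σ] (P : PopComputer σ) : Prop :=
  ∃ Q0 Q1 : Finset σ, Q0 ⊆ P.Q ∧ Q1 ⊆ P.Q ∧ Disjoint Q0 Q1 ∧
    ∀ S : Finset σ, S ⊆ P.Q → S.Nonempty →
      P.O S = if (S ∩ Q1).Nonempty ∧ S ∩ Q0 = ∅ then some true
        else if (S ∩ Q0).Nonempty ∧ S ∩ Q1 = ∅ then some false else none

def IsProtocol [DecidableEq σ] (P : PopComputer σ) : Prop :=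
  Binary P ∧ P.H = 0 ∧ ConsensusOutput P

/-! Boolean circuits, used to measure the size of output functions. -/

inductive Circ (α : Type) : Type where
  | inp : α → Circ α
  | tru : Circ α
  | fal : Circ α
  | neg : Circ α → Circ α
  | conj : Circ α → Circ α → Circ α
  | disj : Circ α → Circ α → Circ α

def Circ.eval {α : Type} (v : α → Bool) : Circ α → Bool
  | .inp a => v a
  | .tru => true
  | .fal => false
  | .neg c => !(Circ.eval v c)
  | .conj c d => Circ.eval v c && Circ.eval v d
  | .disj c d => Circ.eval v c || Circ.eval v d

def Circ.gates {α : Type} : Circ α → ℕ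
  | .inp _ => 1
  | .tru => 1
  | .fal => 1
  | .neg c => Circ.gates c + 1
  | .conj c d => Circ.gates c + Circ.gates d + 1
  | .disj c d => Circ.gates c + Circ.gates d + 1

noncomputable def outSize [DecidableEq σ] (P : PopComputer σ) : ℕ :=
  sInf {n | ∃ cd cv : Circ σ, Circ.gates cd + Circ.gates cv = n ∧
    ∀ S : Finset σ, S ⊆ P.Q →
      P.O S = if Circ.eval (fun q => decide (q ∈ S)) cd then
          some (Circ.eval (fun q => decide (q ∈ S)) cv) else none}

noncomputable def csize [DecidableEq σ] (P : PopComputer σ) : ℕ :=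
  P.Q.card + Multiset.card P.H + outSize P + ∑ t ∈ P.δ, Multiset.card t.1

noncomputable def asize [DecidableEq σ] (P : PopComputer σ) : ℕ :=
  P.Q.card + Multiset.card P.H + outSize P

/-! Probabilistic execution model. -/

def pairCount [DecidableEq σ] (C r : Multiset σ) : ℕ :=
  (Multiset.powersetCard 2 C).count r

noncomputable def stepKer [DecidableEq σ] (P : PopComputer σ) (C C' : Multiset σ) : ℝ≥0∞ :=
  (∑ t ∈ P.δ, if t.1 ≤ C ∧ C' = C - t.1 + t.2 then (pairCount C t.1 : ℝ≥0∞) else 0) /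
      (Nat.choose (Multiset.card C) 2 : ℝ≥0∞) +
    (if C' = C then
      1 - (∑ t ∈ P.δ, (pairCount C t.1 : ℝ≥0∞)) / (Nat.choose (Multiset.card C) 2 : ℝ≥0∞)
    else 0)

noncomputable def hitKer [DecidableEq σ] (P : PopComputer σ) (A : Set (Multiset σ))
    (C C' : Multiset σ) : ℝ≥0∞ :=
  if C ∈ A then (if C' = C then 1 else 0) else stepKer P C C'

noncomputable def hitIter [DecidableEq σ] (P : PopComputer σ) (A : Set (Multiset σ)) :
    ℕ → Multiset σ → Multiset σ → ℝ≥0∞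
  | 0, C, C' => if C' = C then 1 else 0
  | n + 1, C, C' => ∑' D : Multiset σ, hitIter P A n C D * hitKer P A D C'

/-- Expected hitting time of the set `A`, computed as `∑ₜ Pr[Xₜ ∉ A]` for the chain
absorbed at `A`. -/
noncomputable def expHit [DecidableEq σ] (P : PopComputer σ) (A : Set (Multiset σ))
    (C0 : Multiset σ) : ℝ≥0∞ :=
  ∑' n : ℕ, ∑' C : Multiset σ, if C ∈ A then 0 else hitIter P A n C0 C

def StableConfig [DecidableEq σ] (P : PopComputer σ) (C : Multiset σ) : Prop :=
  ∃ b : Bool, ∀ C', Reaches P C C' → P.O C'.toFinset = some b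

noncomputable def expTermination [DecidableEq σ] (P : PopComputer σ) (C0 : Multiset σ) : ℝ≥0∞ :=
  expHit P {C | Terminal P C} C0

noncomputable def expStabilization [DecidableEq σ] (P : PopComputer σ) (C0 : Multiset σ) : ℝ≥0∞ :=
  expHit P {C | StableConfig P C} C0

/-! Quantifier-free Presburger arithmetic. -/

inductive QFPA (v : ℕ) : Type where
  | threshold (a : Fin v → ℤ) (c : ℤ) : QFPA v
  | remainder (a : Fin v → ℤ) (θ : ℕ) (c : Fin θ) : QFPA v
  | not (φ : QFPA v) : QFPA v
  | and (φ ψ : QFPA v) : QFPA v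
  | or (φ ψ : QFPA v) : QFPA v

def QFPA.eval {v : ℕ} : QFPA v → (Fin v → ℕ) → Bool
  | .threshold a c, x => decide (c ≤ ∑ i, a i * (x i : ℤ))
  | .remainder a θ c, x => decide ((∑ i, a i * (x i : ℤ)) % (θ : ℤ) = ((c : ℕ) : ℤ))
  | .not φ, x => !(QFPA.eval φ x)
  | .and φ ψ, x => QFPA.eval φ x && QFPA.eval ψ x
  | .or φ ψ, x => QFPA.eval φ x || QFPA.eval ψ x

def zsize (z : ℤ) : ℕ := Nat.size z.natAbs + 1

def QFPA.fsize {v : ℕ} : QFPA v → ℕ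
  | .threshold a c => (∑ i, zsize (a i)) + zsize c + 1
  | .remainder a θ c => (∑ i, zsize (a i)) + Nat.size θ + Nat.size (c : ℕ) + 1
  | .not φ => QFPA.fsize φ + 1
  | .and φ ψ => QFPA.fsize φ + QFPA.fsize ψ + 1
  | .or φ ψ => QFPA.fsize φ + QFPA.fsize ψ + 1

def QFPA.double {v : ℕ} : QFPA v → QFPA (v + v)
  | .threshold a c =>
      .threshold (fun i => Fin.addCases (fun j => a j) (fun j => 2 * a j) i) c
  | .remainder a θ c =>
      .remainder (fun i => Fin.addCases (fun j => a j) (fun j => 2 * a j) i) θ c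
  | .not φ => .not (QFPA.double φ)
  | .and φ ψ => .and (QFPA.double φ) (QFPA.double ψ)
  | .or φ ψ => .or (QFPA.double φ) (QFPA.double ψ)

def inputConfig {v : ℕ} (lab : Fin v → σ) (x : Fin v → ℕ) : Multiset σ :=
  ∑ i : Fin v, Multiset.replicate (x i) (lab i)

def DecidesQFPA [DecidableEq σ] {v : ℕ} (P : PopComputer σ) (lab : Fin v → σ)
    (φ : QFPA v) : Prop :=
  Function.Injective lab ∧ P.I = Finset.univ.image lab ∧
    ∀ x : Fin v → ℕ, HasOutput P (inputConfig lab x) (QFPA.eval φ x)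

def DecidesQFPAFrom [DecidableEq σ] {v : ℕ} (P : PopComputer σ) (lab : Fin v → σ)
    (φ : QFPA v) (k : ℕ) : Prop :=
  Function.Injective lab ∧ P.I = Finset.univ.image lab ∧
    ∀ x : Fin v → ℕ, k ≤ ∑ i, x i → HasOutput P (inputConfig lab x) (QFPA.eval φ x)

/-! Potential functions and rapidness. -/

def mweight (w : σ → ℕ) (C : Multiset σ) : ℕ := (C.map w).sum

def IsPotential (P : PopComputer σ) (w : σ → ℕ) : Prop :=
  ∀ t ∈ P.δ, mweight w t.2 + (Multiset.card t.1 - 1) ≤ mweight w t.1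

def tmin [DecidableEq σ] (C r : Multiset σ) : ℕ :=
  if h : r.toFinset.Nonempty then r.toFinset.inf' h (fun q => C.count q) else 0

def speedOn [DecidableEq σ] (T : Finset (Multiset σ × Multiset σ)) (C : Multiset σ) : ℕ :=
  ∑ t ∈ T, (tmin C t.1) ^ 2

def speed [DecidableEq σ] (P : PopComputer σ) (C : Multiset σ) : ℕ := speedOn P.δ C

def RapidAt [DecidableEq σ] (P : PopComputer σ) (w : σ → ℕ) (α : ℝ) (C : Multiset σ) : Prop :=
  ∀ Cterm, Reaches P C Cterm → Terminal P Cterm →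
    ((mweight w C : ℝ) - (mweight w Cterm : ℝ)) ^ 2 / α ≤ (speed P C : ℝ)

def countIn [DecidableEq σ] (P : PopComputer σ) (C : Multiset σ) : ℕ :=
  ∑ q ∈ P.I, C.count q

def WellInitialised [DecidableEq σ] (P : PopComputer σ) (C : Multiset σ) : Prop :=
  ReachableConfig P C ∧ 3 * (countIn P C + Multiset.card P.H) ≤ 2 * Multiset.card C

def outdeg [DecidableEq σ] (P : PopComputer σ) (q : σ) : ℕ :=
  (P.δ.filter (fun t => q ∈ t.1)).card

def IsRapid [DecidableEq σ] (P : PopComputer σ) (α : ℝ) : Prop :=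
  (∃ w : σ → ℕ, IsPotential P w ∧ ∀ C, WellInitialised P C → RapidAt P w α C) ∧
  (∃ q0 : σ, ∀ q ∈ P.Q, q ≠ q0 → outdeg P q ≤ 2) ∧
  (∀ C : Multiset σ, IsInput P C → Terminal P C) ∧
  (∀ t ∈ P.δ, ∀ q ∈ P.I, t.1.count q ≤ 1 ∧ t.2.count q = 0)

def deltaGt [DecidableEq σ] (P : PopComputer σ) (w : σ → ℕ) :
    Finset (Multiset σ × Multiset σ) :=
  P.δ.filter (fun t => mweight w t.2 < mweight w t.1)

def deltaLt [DecidableEq σ] (P : PopComputer σ) (w : σ → ℕ) :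
    Finset (Multiset σ × Multiset σ) :=
  P.δ.filter (fun t => mweight w t.1 < mweight w t.2)

def RapidAtGt [DecidableEq σ] (P : PopComputer σ) (w : σ → ℕ) (α : ℝ) (C : Multiset σ) : Prop :=
  ∀ Cterm, Reaches P C Cterm → Terminal P Cterm →
    ((mweight w C : ℝ) - (mweight w Cterm : ℝ)) ^ 2 / α ≤ (speedOn (deltaGt P w) C : ℝ)

def GroupRapidAt [DecidableEq σ] (P : PopComputer σ) {e : ℕ} (w : Fin e → σ → ℕ) (α : ℝ)
    (C : Multiset σ) : Prop :=
  Terminal P C ∨ ∃ i : Fin e,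
    RapidAtGt P (w i) α C ∧
    (∃ t ∈ deltaGt P (w i), t.1 ≤ C) ∧
    (∀ C', Reaches P C C' → ∀ t ∈ deltaLt P (w i), ¬ t.1 ≤ C')

/-- Refinement between computers over the same state space. -/
def Refines [DecidableEq σ] (P' P : PopComputer σ) (π : Multiset σ → Multiset σ) : Prop :=
  (∀ C D, ReachableConfig P' C → ReachableConfig P' D → Step P' C D →
    Reaches P (π C) (π D)) ∧
  (P.I = P'.I ∧ ∀ CI C, IsInput P' CI → Initial P' CI C →
    ((∃ DI, IsInput P DI ∧ Initial P DI (π C)) ∧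
      ∀ q ∈ P.I, (π C).count q = C.count q)) ∧
  (∀ C, ReachableConfig P' C → Terminal P' C →
    Terminal P (π C) ∧ P.O (π C).toFinset = P'.O C.toFinset)


/-!
The states are the numbers `0, 1, 2, …, 2 ^ d` with `d = ⌈log₂ θ⌉`, and the value of a
configuration is the sum of its agents. The doubling rules `2 ^ j, 2 ^ j ↦ 2 ^ (j + 1), 0` keep the
value, and the reduction rule turns `2 ^ d, 2 ^ d` and `d` blank agents into the binary digits of
`2 ^ (d + 1) - 2 * θ`, lowering the value by `2 * θ`. So the value never increases and is invariant
modulo `θ`. In a terminal configuration each nonzero state holds at most one agent: with `p` input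
agents the value stays at most `2 ^ d * p`, so at most `p` agents sit in `2 ^ d`, and the `3 * d`
helpers then leave at least `d` blanks for the reduction rule. Hence the states present sum to the
value, which is the input's value modulo `θ`. The potential `(d + 1) * value + 2 * θ * #(nonzero
agents)` drops by at least `2 * θ` with every step and starts at most `2 * θ * (d + 2) * p`.
-/

section General

variable {σ : Type} {P : PopComputer σ} {C C' D : Multiset σ}

theorem Step.exists_add_eq (h : Step P C C') : ∃ t ∈ P.δ, C' + t.1 = C + t.2 := by
  obtain ⟨t, ht, hle, rfl⟩ := h
  exact ⟨t, ht, by rw [add_right_comm, tsub_add_cancel_of_le hle]⟩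

theorem Step.card_eq (h : Step P C C') : Multiset.card C' = Multiset.card C := by
  obtain ⟨t, ht, heq⟩ := h.exists_add_eq
  have := congrArg Multiset.card heq
  simp only [Multiset.card_add, (P.delta_card t ht).1] at this
  omega

theorem Step.mem_Q (h : Step P C C') (hC : ∀ q ∈ C, q ∈ P.Q) : ∀ q ∈ C', q ∈ P.Q := by
  obtain ⟨t, ht, heq⟩ := h.exists_add_eq
  intro q hq
  have : q ∈ C + t.2 := heq ▸ Multiset.mem_add.mpr (Or.inl hq)
  rcases Multiset.mem_add.mp this with hq | hq
  · exact hC q hq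
  · exact P.delta_mem t ht q (Multiset.mem_add.mpr (Or.inr hq))

theorem Reaches.card_eq (h : Reaches P C D) : Multiset.card D = Multiset.card C := by
  induction h with
  | refl => rfl
  | tail _ hstep ih => exact hstep.card_eq.trans ih

theorem Reaches.mem_Q (h : Reaches P C D) (hC : ∀ q ∈ C, q ∈ P.Q) : ∀ q ∈ D, q ∈ P.Q := by
  induction h with
  | refl => exact hC
  | tail _ hstep ih => exact hstep.mem_Q ih

theorem Reaches.eq_of_terminal (hC : Terminal P C) (h : Reaches P C D) : D = C := by
  rcases h.cases_head with rfl | ⟨_, ⟨t, ht, hle, _⟩, _⟩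
  · rfl
  · exact absurd hle (hC t ht)

theorem reaches_of_forall_step {f : ℕ → Multiset σ} {L : ℕ}
    (hs : ∀ i < L, Step P (f i) (f (i + 1))) : Reaches P (f 0) (f L) := by
  induction L with
  | zero => exact .refl
  | succ L ih => exact (ih fun i hi => hs i (by omega)).tail (hs L (by omega))

theorem IsRun.reaches {f : ℕ → Multiset σ} (hf : IsRun P f) (i : ℕ) : Reaches P (f 0) (f i) := by
  induction i with
  | zero => exact .refl
  | succ i ih =>
    rcases hf i with hs | ⟨_, he⟩
    · exact ih.tail hs
    · exact he ▸ ih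

section Weight

variable {M : Type*} [AddCommMonoid M] [PartialOrder M] [IsOrderedCancelAddMonoid M]

theorem Step.sum_map_add_le (w : σ → M) (k : M)
    (hw : ∀ t ∈ P.δ, (t.2.map w).sum + k ≤ (t.1.map w).sum) (h : Step P C C') :
    (C'.map w).sum + k ≤ (C.map w).sum := by
  obtain ⟨t, ht, heq⟩ := h.exists_add_eq
  have hsum := congrArg (fun D => (D.map w).sum) heq
  simp only [Multiset.map_add, Multiset.sum_add] at hsum
  refine le_of_add_le_add_right (a := (t.1.map w).sum) ?_
  calc (C'.map w).sum + k + (t.1.map w).sum = (C.map w).sum + ((t.2.map w).sum + k) := by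
        rw [add_right_comm, hsum, add_assoc]
    _ ≤ (C.map w).sum + (t.1.map w).sum := add_le_add_right (hw t ht) _

theorem Reaches.sum_map_le (w : σ → M) (hw : ∀ t ∈ P.δ, (t.2.map w).sum ≤ (t.1.map w).sum)
    (h : Reaches P C D) : (D.map w).sum ≤ (C.map w).sum := by
  induction h with
  | refl => exact le_rfl
  | tail _ hstep ih =>
    exact le_trans (by simpa using hstep.sum_map_add_le w 0 (by simpa using hw)) ih

theorem nsmul_le_sum_map_of_forall_step (w : σ → M) (k : M) (hw0 : ∀ q ∈ P.Q, 0 ≤ w q)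
    (hw : ∀ t ∈ P.δ, (t.2.map w).sum + k ≤ (t.1.map w).sum) {f : ℕ → Multiset σ}
    (hf0 : ∀ q ∈ f 0, q ∈ P.Q) {L : ℕ} (hs : ∀ i < L, Step P (f i) (f (i + 1))) :
    L • k ≤ ((f 0).map w).sum := by
  have hdecr : ∀ n ≤ L, ((f n).map w).sum + n • k ≤ ((f 0).map w).sum := by
    intro n hn
    induction n with
    | zero => simp
    | succ n ih =>
      calc ((f (n + 1)).map w).sum + (n + 1) • k
          = ((f (n + 1)).map w).sum + k + n • k := by
            rw [succ_nsmul, add_comm (n • k), add_assoc]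
        _ ≤ ((f n).map w).sum + n • k :=
            add_le_add_left ((hs n (by omega)).sum_map_add_le w k hw) _
        _ ≤ ((f 0).map w).sum := ih (by omega)
  have hnonneg : 0 ≤ ((f L).map w).sum :=
    Multiset.sum_nonneg fun x hx => by
      obtain ⟨q, hq, rfl⟩ := Multiset.mem_map.mp hx
      exact hw0 q ((reaches_of_forall_step hs).mem_Q hf0 q hq)
  exact le_trans (le_add_of_nonneg_left hnonneg) (hdecr L le_rfl)

end Weight

theorem Step.sum_map_modEq (w : σ → ℤ) (n : ℤ)
    (hw : ∀ t ∈ P.δ, (t.2.map w).sum ≡ (t.1.map w).sum [ZMOD n]) (h : Step P C C') :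
    (C'.map w).sum ≡ (C.map w).sum [ZMOD n] := by
  obtain ⟨t, ht, heq⟩ := h.exists_add_eq
  have hsum := congrArg (fun D => (D.map w).sum) heq
  simp only [Multiset.map_add, Multiset.sum_add] at hsum
  refine Int.ModEq.add_right_cancel' (t.1.map w).sum ?_
  rw [hsum]
  exact Int.ModEq.add_left _ (hw t ht)

theorem Reaches.sum_map_modEq (w : σ → ℤ) (n : ℤ)
    (hw : ∀ t ∈ P.δ, (t.2.map w).sum ≡ (t.1.map w).sum [ZMOD n]) (h : Reaches P C D) :
    (D.map w).sum ≡ (C.map w).sum [ZMOD n] := by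
  induction h with
  | refl => rfl
  | tail _ hstep ih => exact (hstep.sum_map_modEq w n hw).trans ih

def RunsBoundedBy (P : PopComputer σ) (N : Multiset σ → ℕ) : Prop :=
  ∀ C0, (∃ CI, IsInput P CI ∧ Initial P CI C0) → ∀ f : ℕ → Multiset σ, f 0 = C0 →
    ∀ L, (∀ i < L, Step P (f i) (f (i + 1))) → L ≤ N C0

variable {N : Multiset σ → ℕ}

theorem RunsBoundedBy.bounded (h : RunsBoundedBy P N) : Bounded P := by
  rintro ⟨f, hf0, hs⟩
  have := h (f 0) hf0 f rfl (N (f 0) + 1) fun i _ => hs i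
  omega

theorem RunsBoundedBy.exists_terminal (h : RunsBoundedBy P N) {f : ℕ → Multiset σ}
    (hf0 : ∃ CI, IsInput P CI ∧ Initial P CI (f 0)) (hf : IsRun P f) : ∃ i, Terminal P (f i) := by
  by_contra! hno
  have hs : ∀ i, Step P (f i) (f (i + 1)) := fun i => (hf i).resolve_right fun h' => hno i h'.1
  exact absurd (h (f 0) hf0 f rfl (N (f 0) + 1) fun i _ => hs i) (by omega)

theorem RunsBoundedBy.hasOutput [DecidableEq σ] (h : RunsBoundedBy P N) {CI : Multiset σ}
    {b : Bool} (hCI : IsInput P CI)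
    (hout : ∀ C0 C, Initial P CI C0 → Reaches P C0 C → Terminal P C → P.O C.toFinset = some b) :
    HasOutput P CI b := by
  rintro C0 f hC0 ⟨hf, -⟩ rfl
  obtain ⟨i, hi⟩ := h.exists_terminal ⟨CI, hCI, hC0⟩ hf
  refine ⟨i, fun C hC => ?_⟩
  rw [hC.eq_of_terminal hi]
  exact hout _ _ hC0 (hf.reaches i) hi

theorem isInput_inputConfig [DecidableEq σ] {v : ℕ} {lab : Fin v → σ}
    (hI : P.I = Finset.univ.image lab) (x : Fin v → ℕ) : IsInput P (inputConfig lab x) := by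
  intro q hq
  obtain ⟨i, -, hq⟩ := Multiset.mem_sum.mp hq
  rw [hI, Multiset.eq_of_mem_replicate hq]
  exact Finset.mem_image_of_mem lab (Finset.mem_univ i)

end General

theorem sum_inputConfig {R : Type} [CommSemiring R] {v : ℕ} (lab : Fin v → R) (x : Fin v → ℕ) :
    (inputConfig lab x).sum = ∑ i, lab i * x i := by
  simp [inputConfig, Multiset.sum_sum, mul_comm]

theorem _root_.Multiset.sum_toFinset_eq_sum {M : Type*} [AddCommMonoid M] [DecidableEq M]
    {C : Multiset M} (h : ∀ q ∈ C, q ≠ 0 → C.count q ≤ 1) : ∑ q ∈ C.toFinset, q = C.sum := by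
  rw [Finset.sum_multiset_count]
  refine Finset.sum_congr rfl fun q hq => ?_
  rw [Multiset.mem_toFinset] at hq
  by_cases hq0 : q = 0
  · simp [hq0]
  · rw [le_antisymm (h q hq hq0) (Multiset.one_le_count_iff_mem.mpr hq), one_smul]

section Remainder

open Multiset

variable (θ : ℕ)

def remainderStates : Finset ℤ :=
  insert 0 ((Finset.range (Nat.clog 2 θ + 1)).image fun j => (2 : ℤ) ^ j)

def doubleRule (j : ℕ) : Multiset ℤ × Multiset ℤ :=
  (replicate 2 (2 ^ j), {2 ^ (j + 1), 0})

def reduceDigits : Multiset ℤ :=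
  ((2 ^ Nat.clog 2 θ - θ).bitIndices.map fun k => (2 : ℤ) ^ (k + 1) : List ℤ)

def reduceRule : Multiset ℤ × Multiset ℤ :=
  (replicate 2 (2 ^ Nat.clog 2 θ) + replicate (Nat.clog 2 θ) 0,
    reduceDigits θ + replicate (Nat.clog 2 θ + 2 - card (reduceDigits θ)) 0)

def remainderRules : Finset (Multiset ℤ × Multiset ℤ) :=
  insert (reduceRule θ) ((Finset.range (Nat.clog 2 θ)).image doubleRule)

variable {θ}

theorem mem_remainderStates {q : ℤ} :
    q ∈ remainderStates θ ↔ q = 0 ∨ ∃ j ≤ Nat.clog 2 θ, q = 2 ^ j := by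
  simp [remainderStates, eq_comm]

theorem mem_remainderRules {t : Multiset ℤ × Multiset ℤ} :
    t ∈ remainderRules θ ↔ t = reduceRule θ ∨ ∃ j < Nat.clog 2 θ, t = doubleRule j := by
  simp [remainderRules, eq_comm]

theorem nonneg_of_mem_remainderStates {q : ℤ} (hq : q ∈ remainderStates θ) : 0 ≤ q := by
  rcases mem_remainderStates.mp hq with rfl | ⟨j, -, rfl⟩ <;> positivity

theorem le_two_pow_clog_of_mem_remainderStates {q : ℤ} (hq : q ∈ remainderStates θ) :
    q ≤ 2 ^ Nat.clog 2 θ := by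
  rcases mem_remainderStates.mp hq with rfl | ⟨j, hj, rfl⟩
  · positivity
  · exact pow_le_pow_right₀ one_le_two hj

theorem two_pow_clog_le_two_mul (hθ : 1 ≤ θ) : 2 ^ Nat.clog 2 θ ≤ 2 * θ := by
  rcases hθ.eq_or_lt with rfl | hθ
  · simp
  · have := Nat.pow_pred_clog_lt_self one_lt_two hθ
    have hd := Nat.clog_pos one_lt_two hθ
    rw [← Nat.succ_pred_eq_of_pos hd, pow_succ]
    omega

theorem mem_reduceDigits (hθ : 1 ≤ θ) {q : ℤ} (hq : q ∈ reduceDigits θ) :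
    ∃ j, 1 ≤ j ∧ j ≤ Nat.clog 2 θ ∧ q = 2 ^ j := by
  simp only [reduceDigits, Multiset.mem_coe, List.mem_map] at hq
  obtain ⟨k, hk, rfl⟩ := hq
  have h1 := Nat.two_pow_le_of_mem_bitIndices hk
  have h2 : θ ≤ 2 ^ Nat.clog 2 θ := Nat.le_pow_clog one_lt_two θ
  have : k < Nat.clog 2 θ := (Nat.pow_lt_pow_iff_right one_lt_two).mp (by omega)
  exact ⟨k + 1, by omega, by omega, rfl⟩

theorem card_reduceDigits_le (hθ : 1 ≤ θ) : card (reduceDigits θ) ≤ Nat.clog 2 θ := by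
  have h2 : θ ≤ 2 ^ Nat.clog 2 θ := Nat.le_pow_clog one_lt_two θ
  have hsub : (2 ^ Nat.clog 2 θ - θ).bitIndices.toFinset ⊆ Finset.range (Nat.clog 2 θ) := by
    intro k hk
    have := Nat.two_pow_le_of_mem_bitIndices (List.mem_toFinset.mp hk)
    exact Finset.mem_range.mpr ((Nat.pow_lt_pow_iff_right one_lt_two).mp (by omega))
  simpa [reduceDigits, List.toFinset_card_of_nodup Nat.bitIndices_nodup] using
    Finset.card_le_card hsub

theorem sum_reduceDigits :
    (reduceDigits θ).sum + 2 * θ = 2 ^ (Nat.clog 2 θ + 1) := by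
  have h2 : θ ≤ 2 ^ Nat.clog 2 θ := Nat.le_pow_clog one_lt_two θ
  have hdig : (reduceDigits θ).sum = 2 * ((2 ^ Nat.clog 2 θ - θ : ℕ) : ℤ) := by
    rw [← Nat.sum_map_two_pow_bitIndices (2 ^ Nat.clog 2 θ - θ), Nat.cast_list_sum,
      ← List.sum_map_mul_left]
    simp [reduceDigits, Function.comp_def, pow_succ, mul_comm]
  rw [hdig, Nat.cast_sub h2, pow_succ]
  push_cast
  ring

theorem remainderRules_sum {t : Multiset ℤ × Multiset ℤ} (ht : t ∈ remainderRules θ) :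
    t.1.sum = t.2.sum ∨ t.1.sum = t.2.sum + 2 * θ := by
  rcases mem_remainderRules.mp ht with rfl | ⟨j, -, rfl⟩
  · right
    have := sum_reduceDigits (θ := θ)
    simp only [reduceRule, sum_add, sum_replicate, nsmul_eq_mul, mul_zero, add_zero]
    push_cast
    linear_combination -this + (pow_succ (2 : ℤ) (Nat.clog 2 θ)).symm
  · left
    simp only [doubleRule, replicate_succ, replicate_zero, cons_zero, insert_eq_cons, sum_cons,
      sum_singleton, add_zero, pow_succ]
    ring

variable (θ) in
def remainderPotential (q : ℤ) : ℤ :=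
  (Nat.clog 2 θ + 1) * q + if q = 0 then 0 else 2 * (θ : ℤ)

theorem remainderPotential_nonneg {q : ℤ} (hq : 0 ≤ q) : 0 ≤ remainderPotential θ q := by
  unfold remainderPotential
  split_ifs <;> positivity

theorem sum_map_remainderPotential_replicate_zero (n : ℕ) :
    ((replicate n (0 : ℤ)).map (remainderPotential θ)).sum = 0 := by
  simp [remainderPotential]

theorem sum_map_remainderPotential_of_ne_zero {D : Multiset ℤ} (hD : ∀ q ∈ D, q ≠ 0) :
    (D.map (remainderPotential θ)).sum = (Nat.clog 2 θ + 1) * D.sum + card D * (2 * θ) := by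
  rw [Multiset.map_congr rfl fun q hq => by rw [remainderPotential, if_neg (hD q hq)],
    Multiset.sum_map_add, Multiset.sum_map_mul_left, Multiset.map_id', Multiset.map_const',
    Multiset.sum_replicate, nsmul_eq_mul]

theorem remainderRules_potential (hθ : 1 ≤ θ) {t : Multiset ℤ × Multiset ℤ}
    (ht : t ∈ remainderRules θ) :
    (t.2.map (remainderPotential θ)).sum + 2 * θ ≤ (t.1.map (remainderPotential θ)).sum := by
  have two_pow_ne_zero (j : ℕ) : (2 : ℤ) ^ j ≠ 0 := by positivity
  rcases mem_remainderRules.mp ht with rfl | ⟨j, -, rfl⟩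
  · have hdig : ∀ q ∈ reduceDigits θ, q ≠ 0 := fun q hq => by
      obtain ⟨j, -, -, rfl⟩ := mem_reduceDigits hθ hq
      exact two_pow_ne_zero j
    have hsum := sum_reduceDigits (θ := θ)
    have hcard : (card (reduceDigits θ) : ℤ) ≤ Nat.clog 2 θ := by
      exact_mod_cast card_reduceDigits_le hθ
    simp only [reduceRule, map_add, sum_add, sum_map_remainderPotential_replicate_zero, add_zero,
      sum_map_remainderPotential_of_ne_zero hdig,
      sum_map_remainderPotential_of_ne_zero fun q hq => (eq_of_mem_replicate hq).symm ▸
        two_pow_ne_zero _, sum_replicate, card_replicate, nsmul_eq_mul]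
    rw [pow_succ] at hsum
    push_cast
    nlinarith [mul_le_mul_of_nonneg_left hcard (by positivity : (0 : ℤ) ≤ 2 * θ)]
  · simp only [doubleRule, remainderPotential, replicate_succ, replicate_zero, cons_zero,
      insert_eq_cons, map_cons, map_singleton, sum_cons, sum_singleton, mul_eq_zero,
      two_pow_ne_zero, OfNat.ofNat_ne_zero, or_self, ↓reduceIte, mul_zero, add_zero, pow_succ]
    linarith

section Terminal

variable {C : Multiset ℤ} (hC : ∀ t ∈ remainderRules θ, ¬ t.1 ≤ C)
include hC

theorem count_two_pow_le_one_of_forall_not_le {j : ℕ} (hj : j < Nat.clog 2 θ) :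
    C.count (2 ^ j) ≤ 1 := by
  by_contra! h
  exact hC (doubleRule j) (mem_remainderRules.mpr (Or.inr ⟨j, hj, rfl⟩))
    (le_count_iff_replicate_le.mp h)

theorem card_le_of_forall_not_le (hQ : ∀ q ∈ C, q ∈ remainderStates θ) :
    card C ≤ C.count 0 + Nat.clog 2 θ + C.count (2 ^ Nat.clog 2 θ) := by
  have hlow := Finset.sum_le_card_nsmul (Finset.range (Nat.clog 2 θ)) (fun j => C.count (2 ^ j))
    1 fun j hj => count_two_pow_le_one_of_forall_not_le hC (Finset.mem_range.mp hj)
  rw [Finset.card_range, smul_eq_mul, mul_one] at hlow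
  rw [← sum_count_eq_card hQ, remainderStates, Finset.sum_insert, Finset.sum_image,
    Finset.sum_range_succ]
  · omega
  · exact fun i _ j _ h => pow_right_injective₀ two_pos (by norm_num) h
  · simp

theorem count_two_pow_clog_le_one_of_forall_not_le (hQ : ∀ q ∈ C, q ∈ remainderStates θ)
    {p : ℕ} (hsum : C.sum ≤ 2 ^ Nat.clog 2 θ * p) (hcard : p + 2 * Nat.clog 2 θ ≤ card C) :
    C.count (2 ^ Nat.clog 2 θ) ≤ 1 := by
  set m := C.count (2 ^ Nat.clog 2 θ)
  by_contra! h2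
  have hm : m ≤ p := by
    obtain ⟨E, hE⟩ := Multiset.le_iff_exists_add.mp (le_count_iff_replicate_le.mp le_rfl :
      replicate m ((2 : ℤ) ^ Nat.clog 2 θ) ≤ C)
    have hE0 : 0 ≤ E.sum := sum_nonneg fun q hq =>
      nonneg_of_mem_remainderStates (hQ q (hE ▸ mem_add.mpr (Or.inr hq)))
    rw [hE, sum_add, sum_replicate, nsmul_eq_mul] at hsum
    have : (m : ℤ) * 2 ^ Nat.clog 2 θ ≤ p * 2 ^ Nat.clog 2 θ := by linarith
    exact_mod_cast le_of_mul_le_mul_right this (by positivity)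
  have hzero : Nat.clog 2 θ ≤ C.count 0 := by
    have := card_le_of_forall_not_le hC hQ
    omega
  refine hC _ (mem_remainderRules.mpr (Or.inl rfl)) (Multiset.le_iff_count.mpr fun q => ?_)
  simp only [reduceRule, count_add, count_replicate]
  split_ifs with htop hzero' hzero'
  · exact absurd (htop.trans hzero'.symm) (by positivity)
  · rw [← htop]; omega
  · rw [← hzero']; omega
  · omega

theorem sum_toFinset_eq_sum_of_forall_not_le (hQ : ∀ q ∈ C, q ∈ remainderStates θ) {p : ℕ}
    (hsum : C.sum ≤ 2 ^ Nat.clog 2 θ * p) (hcard : p + 2 * Nat.clog 2 θ ≤ card C) :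
    ∑ q ∈ C.toFinset, q = C.sum := by
  refine Multiset.sum_toFinset_eq_sum fun q hq hq0 => ?_
  obtain ⟨j, hj, rfl⟩ := (mem_remainderStates.mp (hQ q hq)).resolve_left hq0
  rcases hj.lt_or_eq with hj | rfl
  · exact count_two_pow_le_one_of_forall_not_le hC hj
  · exact count_two_pow_clog_le_one_of_forall_not_le hC hQ hsum hcard

end Terminal

theorem remainderRules_mem_states (hθ : 1 ≤ θ) {t : Multiset ℤ × Multiset ℤ}
    (ht : t ∈ remainderRules θ) : ∀ q ∈ t.1 + t.2, q ∈ remainderStates θ := by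
  intro q hq
  rw [mem_remainderStates]
  rcases mem_remainderRules.mp ht with rfl | ⟨j, hj, rfl⟩
  · simp only [reduceRule, mem_add, mem_replicate] at hq
    rcases hq with ((⟨-, rfl⟩ | ⟨-, rfl⟩) | hq | ⟨-, rfl⟩)
    · exact Or.inr ⟨_, le_rfl, rfl⟩
    · exact Or.inl rfl
    · obtain ⟨k, -, hk, rfl⟩ := mem_reduceDigits hθ hq
      exact Or.inr ⟨k, hk, rfl⟩
    · exact Or.inl rfl
  · simp only [doubleRule, mem_add, mem_replicate, insert_eq_cons, mem_cons,
      mem_singleton] at hq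
    rcases hq with ⟨-, rfl⟩ | rfl | rfl
    · exact Or.inr ⟨j, hj.le, rfl⟩
    · exact Or.inr ⟨j + 1, hj, rfl⟩
    · exact Or.inl rfl

theorem card_reduceRule_fst : card (reduceRule θ).1 = Nat.clog 2 θ + 2 := by
  simp only [reduceRule, card_add, card_replicate]
  omega

theorem remainderRules_card (hθ : 1 ≤ θ) {t : Multiset ℤ × Multiset ℤ}
    (ht : t ∈ remainderRules θ) : card t.2 = card t.1 ∧ 2 ≤ card t.1 := by
  rcases mem_remainderRules.mp ht with rfl | ⟨j, -, rfl⟩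
  · have := card_reduceDigits_le hθ
    rw [card_reduceRule_fst]
    simp only [reduceRule, card_add, card_replicate]
    omega
  · simp [doubleRule]

theorem remainderRules_supp {t : Multiset ℤ × Multiset ℤ} (ht : t ∈ remainderRules θ) :
    ∃ a b : ℤ, ∀ q ∈ t.1, q = a ∨ q = b := by
  rcases mem_remainderRules.mp ht with rfl | ⟨j, -, rfl⟩
  · refine ⟨2 ^ Nat.clog 2 θ, 0, fun q hq => ?_⟩
    simp only [reduceRule, mem_add, mem_replicate] at hq
    tauto
  · exact ⟨2 ^ j, 2 ^ j, fun q hq => Or.inl (eq_of_mem_replicate hq)⟩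

theorem remainderRules_eq_of_fst_eq {t u : Multiset ℤ × Multiset ℤ} (ht : t ∈ remainderRules θ)
    (hu : u ∈ remainderRules θ) (h : t.1 = u.1) : t = u := by
  have card_ne {j : ℕ} (hj : j < Nat.clog 2 θ) : (doubleRule j).1 ≠ (reduceRule θ).1 :=
    fun h => by
      have := congrArg card h
      simp only [doubleRule, card_replicate, card_reduceRule_fst] at this
      omega
  rcases mem_remainderRules.mp ht with rfl | ⟨j, hj, rfl⟩ <;>
    rcases mem_remainderRules.mp hu with rfl | ⟨k, hk, rfl⟩
  · rfl
  · exact absurd h.symm (card_ne hk)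
  · exact absurd h (card_ne hj)
  · have : (2 : ℤ) ^ j = 2 ^ k := (replicate_right_injective two_ne_zero) h
    rw [pow_right_injective₀ two_pos (by norm_num) this]

variable (θ) in
def remainderComputer (I : Finset ℤ) (c : ℕ) (hθ : 1 ≤ θ)
    (hI : I ⊆ (remainderStates θ).erase 0) : PopComputer ℤ where
  Q := remainderStates θ
  δ := remainderRules θ
  I := I
  O S := some (decide ((∑ q ∈ S, q) % (θ : ℤ) = (c : ℤ)))
  H := replicate (3 * Nat.clog 2 θ) 0
  delta_mem _ ht := remainderRules_mem_states hθ ht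
  delta_card _ ht := remainderRules_card hθ ht
  delta_supp _ ht := remainderRules_supp ht
  delta_fun _ ht _ hu h := by rw [remainderRules_eq_of_fst_eq ht hu h]
  I_sub := hI.trans (Finset.erase_subset _ _)
  H_mem q hq := by
    rw [eq_of_mem_replicate hq]
    exact ⟨Finset.mem_insert_self _ _, fun h => (Finset.mem_erase.mp (hI h)).1 rfl⟩

section Computer

variable {I : Finset ℤ} {c : ℕ} {hθ : 1 ≤ θ} {hI : I ⊆ (remainderStates θ).erase 0}

theorem remainderComputer_initial {CI C0 : Multiset ℤ}
    (h : Initial (remainderComputer θ I c hθ hI) CI C0) :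
    ∃ n, 3 * Nat.clog 2 θ ≤ n ∧ C0 = CI + replicate n 0 := by
  obtain ⟨CH, hmem, hle, rfl⟩ := h
  refine ⟨card CH, by simpa [remainderComputer] using card_le_card hle, ?_⟩
  rw [← eq_replicate_of_mem fun q hq => eq_of_mem_replicate (hmem q hq)]

theorem remainderComputer_input {CI : Multiset ℤ}
    (h : IsInput (remainderComputer θ I c hθ hI) CI) {q : ℤ} (hq : q ∈ CI) :
    q ≠ 0 ∧ q ∈ remainderStates θ :=
  Finset.mem_erase.mp (hI (h q hq))

theorem remainderComputer_mem_states_of_initial {CI C0 : Multiset ℤ}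
    (hCI : IsInput (remainderComputer θ I c hθ hI) CI)
    (hC0 : Initial (remainderComputer θ I c hθ hI) CI C0) : ∀ q ∈ C0, q ∈ remainderStates θ := by
  obtain ⟨n, -, rfl⟩ := remainderComputer_initial hC0
  intro q hq
  rcases mem_add.mp hq with hq | hq
  · exact (remainderComputer_input hCI hq).2
  · rw [eq_of_mem_replicate hq]
    exact Finset.mem_insert_self _ _

theorem remainderComputer_sum_le_of_isInput {CI : Multiset ℤ}
    (h : IsInput (remainderComputer θ I c hθ hI) CI) :
    CI.sum ≤ 2 ^ Nat.clog 2 θ * card CI := by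
  have := sum_le_card_nsmul CI _ fun q hq =>
    le_two_pow_clog_of_mem_remainderStates (remainderComputer_input h hq).2
  rwa [nsmul_eq_mul, mul_comm] at this

theorem remainderComputer_potential_le_of_isInput {CI : Multiset ℤ}
    (h : IsInput (remainderComputer θ I c hθ hI) CI) :
    (CI.map (remainderPotential θ)).sum ≤ card CI * (2 * θ * (Nat.clog 2 θ + 2)) := by
  have hpow : (2 : ℤ) ^ Nat.clog 2 θ ≤ 2 * θ := by exact_mod_cast two_pow_clog_le_two_mul hθ
  rw [sum_map_remainderPotential_of_ne_zero fun q hq => (remainderComputer_input h hq).1]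
  have hsum := remainderComputer_sum_le_of_isInput h
  have hd : (0 : ℤ) ≤ Nat.clog 2 θ + 1 := by positivity
  nlinarith [mul_le_mul_of_nonneg_left
    (mul_le_mul_of_nonneg_right hpow (Nat.cast_nonneg (card CI))) hd]

theorem remainderComputer_runsBoundedBy :
    RunsBoundedBy (remainderComputer θ I c hθ hI) fun C0 => (card C0 + 1) ^ 2 := by
  rintro C0 ⟨CI, hCI, hC0⟩ f rfl L hs
  have hdecr := nsmul_le_sum_map_of_forall_step (remainderPotential θ) (2 * θ)
    (fun q hq => remainderPotential_nonneg (nonneg_of_mem_remainderStates hq))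
    (fun t ht => remainderRules_potential hθ ht)
    (remainderComputer_mem_states_of_initial hCI hC0) hs
  have hin := remainderComputer_potential_le_of_isInput hCI
  obtain ⟨n, hn, hf0⟩ := remainderComputer_initial hC0
  rw [hf0, map_add, sum_add, sum_map_remainderPotential_replicate_zero, add_zero,
    nsmul_eq_mul] at hdecr
  have hL : L ≤ card CI * (Nat.clog 2 θ + 2) := by
    have : (2 * θ : ℤ) * L ≤ 2 * θ * (card CI * (Nat.clog 2 θ + 2)) := by linarith
    exact_mod_cast le_of_mul_le_mul_left this (by positivity)
  dsimp only
  rw [hf0, card_add, card_replicate]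
  nlinarith

theorem remainderComputer_sum_toFinset_modEq {CI C0 C : Multiset ℤ}
    (hCI : IsInput (remainderComputer θ I c hθ hI) CI)
    (hC0 : Initial (remainderComputer θ I c hθ hI) CI C0)
    (hC : Reaches (remainderComputer θ I c hθ hI) C0 C)
    (hterm : Terminal (remainderComputer θ I c hθ hI) C) :
    ∑ q ∈ C.toFinset, q ≡ CI.sum [ZMOD θ] := by
  have hQ := hC.mem_Q (remainderComputer_mem_states_of_initial hCI hC0)
  obtain ⟨n, hn, rfl⟩ := remainderComputer_initial hC0
  have hsum0 : (CI + replicate n 0).sum = CI.sum := by simp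
  have hle := hC.sum_map_le (fun q => q) fun t ht => by
    rcases remainderRules_sum ht with h | h <;> simp only [map_id'] <;> omega
  have hmod := hC.sum_map_modEq (fun q => q) θ fun t ht => by
    rcases remainderRules_sum ht with h | h <;> simp only [map_id', h]
    · rfl
    · exact Int.modEq_iff_dvd.mpr ⟨2, by ring⟩
  simp only [map_id', hsum0] at hle hmod
  rw [sum_toFinset_eq_sum_of_forall_not_le hterm hQ
    (hle.trans (remainderComputer_sum_le_of_isInput hCI))]
  · exact hmod
  · rw [hC.card_eq, card_add, card_replicate]
    omega

theorem remainderComputer_hasOutput {CI : Multiset ℤ}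
    (hCI : IsInput (remainderComputer θ I c hθ hI) CI) :
    HasOutput (remainderComputer θ I c hθ hI) CI (decide (CI.sum % θ = c)) :=
  remainderComputer_runsBoundedBy.hasOutput hCI fun _ _ hC0 hC hterm => by
    have h := remainderComputer_sum_toFinset_modEq hCI hC0 hC hterm
    rw [Int.ModEq] at h
    simp only [remainderComputer, h]

end Computer

end Remainder

theorem stmt5_general (θ : ℕ) (hθ : 1 ≤ θ) (v : ℕ) (a : Fin v → ℤ) (c : ℕ)
    (ha : ∀ i, ∃ j : ℕ, j < Nat.clog 2 θ ∧ a i = 2 ^ j ∧ a i < (θ : ℤ)) :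
    ∃ P : PopComputer ℤ,
      P.Q = insert 0 ((Finset.range (Nat.clog 2 θ + 1)).image fun j => (2 : ℤ) ^ j) ∧
      P.I = Finset.univ.image a ∧
      P.H = Multiset.replicate (3 * Nat.clog 2 θ) (0 : ℤ) ∧
      (∀ S : Finset ℤ, S ⊆ P.Q →
        P.O S = some (decide ((∑ q ∈ S, q) % (θ : ℤ) = (c : ℤ)))) ∧
      Bounded P ∧
      (∀ x : Fin v → ℕ,
        HasOutput P (inputConfig a x)
          (decide ((∑ i, a i * (x i : ℤ)) % (θ : ℤ) = (c : ℤ)))) ∧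
      (∀ C0 : Multiset ℤ, (∃ CI, IsInput P CI ∧ Initial P CI C0) →
        ∀ f : ℕ → Multiset ℤ, f 0 = C0 →
          ∀ L : ℕ, (∀ i < L, Step P (f i) (f (i + 1))) →
            L ≤ (Multiset.card C0 + 1) ^ 2) := by
  have hI : Finset.univ.image a ⊆ (remainderStates θ).erase 0 := by
    simp only [Finset.subset_iff, Finset.mem_image, Finset.mem_univ, true_and,
      Finset.mem_erase, forall_exists_index, forall_apply_eq_imp_iff]
    intro i
    obtain ⟨j, hj, hai, -⟩ := ha i
    exact ⟨hai ▸ pow_ne_zero j two_ne_zero, mem_remainderStates.mpr (Or.inr ⟨j, hj.le, hai⟩)⟩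
  refine ⟨remainderComputer θ (Finset.univ.image a) c hθ hI, rfl, rfl, rfl, fun S _ => rfl,
    remainderComputer_runsBoundedBy.bounded, fun x => ?_, remainderComputer_runsBoundedBy⟩
  simpa only [sum_inputConfig] using
    remainderComputer_hasOutput (hθ := hθ) (hI := hI) (isInput_inputConfig rfl x)

/-- Lemma 6.6: population computers for remainder predicates. -/
theorem stmt5 (θ : ℕ) (hθ : 1 ≤ θ) (v : ℕ) (a : Fin v → ℤ) (c : ℕ) (hc : c < θ)
    (ha : ∀ i, ∃ j : ℕ, j < Nat.clog 2 θ ∧ a i = 2 ^ j ∧ a i < (θ : ℤ)) :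
    ∃ P : PopComputer ℤ,
      P.Q = insert 0 ((Finset.range (Nat.clog 2 θ + 1)).image fun j => (2 : ℤ) ^ j) ∧
      P.I = Finset.univ.image a ∧
      P.H = Multiset.replicate (3 * Nat.clog 2 θ) (0 : ℤ) ∧
      (∀ S : Finset ℤ, S ⊆ P.Q →
        P.O S = some (decide ((∑ q ∈ S, q) % (θ : ℤ) = (c : ℤ)))) ∧
      Bounded P ∧
      (∀ x : Fin v → ℕ,
        HasOutput P (inputConfig a x)
          (decide ((∑ i, a i * (x i : ℤ)) % (θ : ℤ) = (c : ℤ)))) ∧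
      (∀ C0 : Multiset ℤ, (∃ CI, IsInput P CI ∧ Initial P CI C0) →
        ∀ f : ℕ → Multiset ℤ, f 0 = C0 →
          ∀ L : ℕ, (∀ i < L, Step P (f i) (f (i + 1))) →
            L ≤ (Multiset.card C0 + 1) ^ 2) :=
  stmt5_general θ hθ v a c ha

end PaperPP
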